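/- Let x_1, …, x_n ∈ ℝ^d, b : ℕ → ℝ, and H be as in the multivariate learning setup (unit-norm data, b_0 ≥ 1, b_k ≥ 1/k² for k ≥ 1, Σ_k b_k < ∞, H positive definite). Let f(s,t) = Σ_{j,k} c_{jk} s^j t^k be a bivariate power series and f̃(s,t) = Σ_{j,k} |c_{jk}| s^j t^k. Let g and h be given by multivariate power-series families with auxiliary functions g̃ and h̃ (all finite at 1 along with their derivatives), and suppose f̃ and its partial derivatives converge at (g̃(1), h̃(1)). Define y ∈ ℝⁿ by y_a = f(g(x_a), h(x_a)). Then √(yᵀ H⁻¹ y) ≤ ∂_s f̃(g̃(1), h̃(1))·g̃′(1) + ∂_t f̃(g̃(1), h̃(1))·h̃′(1) + f̃(g̃(0), h̃(0)). -/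

import Mathlib

/-!
Expand `y` as a formal series of monomials `∏ⱼ ⟪wⱼ, x⟫`. For one monomial of degree `m`,
Cauchy–Schwarz in `(ℝᵈ)^{⊗m}` gives
`|∑_a u_a ∏ⱼ ⟪wⱼ, x_a⟫| ≤ ∏ⱼ ‖wⱼ‖ · √(∑_{a,c} u_a u_c ⟪x_a, x_c⟫ ^ m)`, and this Gram form is
at most `max(m, 1)² · uᵀHu` because `b_m ≥ 1 / max(m, 1)²`. Summing over the series gives
`|uᵀy| ≤ M · √(uᵀHu)`, where `M` adds up `m · |coefficient| · ∏ⱼ ‖wⱼ‖` over all monomials plus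
`|coefficient|` over the constant ones; taking `u = H⁻¹y` yields `√(yᵀH⁻¹y) ≤ M`. For
`y = f(g, h)`, `M` is computed monomial by monomial: by the product rule the first part for
`gʲhᵏ` is `j g̃(1)^(j-1) g̃'(1) h̃(1)^k + k g̃(1)^j h̃(1)^(k-1) h̃'(1)`, and the constant part is
`g̃(0)ʲ h̃(0)ᵏ`.
-/

open Matrix
open scoped RealInnerProductSpace

/-- The `k`-th auxiliary coefficient `ãₖ = ∑_v |a_{k,v}| ∏ᵢ ‖β_{k,v,i}‖` of a
multivariate power-series family. -/
noncomputable def auxCoef (d : ℕ) (a : ℕ → ℕ → ℝ)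
    (β : (k : ℕ) → ℕ → Fin k → EuclideanSpace ℝ (Fin d)) (k : ℕ) : ℝ :=
  ∑' v : ℕ, |a k v| * ∏ i : Fin k, ‖β k v i‖

/-- The function `x ↦ ∑_k ∑_v a_{k,v} ∏ᵢ ⟪β_{k,v,i}, x⟫` represented by a
multivariate power-series family. -/
noncomputable def familyFun (d : ℕ) (a : ℕ → ℕ → ℝ)
    (β : (k : ℕ) → ℕ → Fin k → EuclideanSpace ℝ (Fin d))
    (x : EuclideanSpace ℝ (Fin d)) : ℝ :=
  ∑' k : ℕ, ∑' v : ℕ, a k v * ∏ i : Fin k, ⟪β k v i, x⟫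

lemma hasSum_sigma_of_nonneg {κ : Type*} {β : κ → Type*} {f : (p : κ) × β p → ℝ}
    (h0 : ∀ q, 0 ≤ f q) (hf : ∀ p, Summable fun i => f ⟨p, i⟩)
    (hg : Summable fun p => ∑' i, f ⟨p, i⟩) :
    HasSum f (∑' p, ∑' i, f ⟨p, i⟩) := by
  have hs : Summable f := (summable_sigma_of_nonneg h0).2 ⟨hf, hg⟩
  exact hs.tsum_sigma' hf ▸ hs.hasSum

/-- The formal sum `∑ i, coef i * ∏ j, ⟪vec i j, ·⟫` of products of `deg i` linear forms.
Its `mass`, `degMass` and `constMass` play the roles of `g̃(1)`, `g̃'(1)` and `g̃(0)`. -/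
structure MonomialSeries (E : Type*) where
  ι : Type
  deg : ι → ℕ
  coef : ι → ℝ
  vec : (i : ι) → Fin (deg i) → E

namespace MonomialSeries

variable {E : Type*}

instance : One (MonomialSeries E) := ⟨⟨Unit, fun _ => 0, fun _ => 1, fun _ => Fin.elim0⟩⟩

instance : Unique (1 : MonomialSeries E).ι := inferInstanceAs (Unique Unit)

instance : Mul (MonomialSeries E) := ⟨fun S T =>
  ⟨S.ι × T.ι, fun p => S.deg p.1 + T.deg p.2, fun p => S.coef p.1 * T.coef p.2,
    fun p => Fin.append (S.vec p.1) (T.vec p.2)⟩⟩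

instance : SMul ℝ (MonomialSeries E) := ⟨fun t S => { S with coef := fun i => t * S.coef i }⟩

def pow (S : MonomialSeries E) : ℕ → MonomialSeries E
  | 0 => 1
  | j + 1 => S.pow j * S

def sigma {κ : Type} (R : κ → MonomialSeries E) : MonomialSeries E :=
  ⟨(p : κ) × (R p).ι, fun q => (R q.1).deg q.2, fun q => (R q.1).coef q.2,
    fun q => (R q.1).vec q.2⟩

def homogeneous (k : ℕ) (a : ℕ → ℝ) (β : ℕ → Fin k → E) : MonomialSeries E :=
  ⟨ℕ, fun _ => k, a, β⟩

def ofFamily (a : ℕ → ℕ → ℝ) (β : (k : ℕ) → ℕ → Fin k → E) : MonomialSeries E :=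
  sigma fun k => homogeneous k (a k) (β k)

def comp₂ (c : ℕ → ℕ → ℝ) (G K : MonomialSeries E) : MonomialSeries E :=
  sigma fun p : ℕ × ℕ => c p.1 p.2 • (G.pow p.1 * K.pow p.2)

lemma deg_one (i : (1 : MonomialSeries E).ι) : (1 : MonomialSeries E).deg i = 0 := rfl

section Mass

variable [SeminormedAddCommGroup E] (S T : MonomialSeries E)

noncomputable def weight (i : S.ι) : ℝ := |S.coef i| * ∏ j, ‖S.vec i j‖

noncomputable def degWeight (i : S.ι) : ℝ := S.deg i * S.weight i

noncomputable def constWeight (i : S.ι) : ℝ := if S.deg i = 0 then S.weight i else 0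

noncomputable def mass : ℝ := ∑' i, S.weight i

noncomputable def degMass : ℝ := ∑' i, S.degWeight i

noncomputable def constMass : ℝ := ∑' i, S.constWeight i

structure IsSummable : Prop where
  weight : Summable S.weight
  degWeight : Summable S.degWeight

lemma weight_nonneg (i : S.ι) : 0 ≤ S.weight i := by unfold weight; positivity

lemma degWeight_nonneg (i : S.ι) : 0 ≤ S.degWeight i :=
  mul_nonneg (Nat.cast_nonneg _) (S.weight_nonneg i)

lemma constWeight_nonneg (i : S.ι) : 0 ≤ S.constWeight i := by
  unfold constWeight; split_ifs <;> simp [S.weight_nonneg]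

lemma constWeight_le_weight (i : S.ι) : S.constWeight i ≤ S.weight i := by
  unfold constWeight; split_ifs <;> simp [S.weight_nonneg]

lemma degMass_nonneg : 0 ≤ S.degMass := tsum_nonneg S.degWeight_nonneg

lemma constMass_nonneg : 0 ≤ S.constMass := tsum_nonneg S.constWeight_nonneg

variable {S T}

lemma summable_constWeight (hS : Summable S.weight) : Summable S.constWeight :=
  hS.of_nonneg_of_le S.constWeight_nonneg S.constWeight_le_weight

lemma constMass_le_mass (hS : Summable S.weight) : S.constMass ≤ S.mass :=
  (summable_constWeight hS).tsum_le_tsum S.constWeight_le_weight hS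

lemma weight_one (i : (1 : MonomialSeries E).ι) : (1 : MonomialSeries E).weight i = 1 := by
  show |(1 : ℝ)| * ∏ j : Fin 0, _ = 1
  simp

lemma isSummable_one : (1 : MonomialSeries E).IsSummable :=
  ⟨.of_finite, .of_finite⟩

lemma mass_one : (1 : MonomialSeries E).mass = 1 := by
  simp [mass, weight_one]

lemma degMass_one : (1 : MonomialSeries E).degMass = 0 := by
  simp [degMass, degWeight, deg_one]

lemma constMass_one : (1 : MonomialSeries E).constMass = 1 := by
  simp [constMass, constWeight, weight_one, deg_one]

lemma weight_mul (p : S.ι × T.ι) : (S * T).weight p = S.weight p.1 * T.weight p.2 := by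
  show |S.coef p.1 * T.coef p.2| * ∏ j, ‖Fin.append (S.vec p.1) (T.vec p.2) j‖ = _
  rw [Fin.prod_univ_add]
  simp only [Fin.append_left, Fin.append_right, abs_mul, weight]
  ring

lemma degWeight_mul (p : S.ι × T.ι) :
    (S * T).degWeight p = S.degWeight p.1 * T.weight p.2 + S.weight p.1 * T.degWeight p.2 := by
  show ((S.deg p.1 + T.deg p.2 : ℕ) : ℝ) * _ = _
  rw [weight_mul, degWeight, degWeight]
  push_cast
  ring

lemma constWeight_mul (p : S.ι × T.ι) :
    (S * T).constWeight p = S.constWeight p.1 * T.constWeight p.2 := by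
  show (if S.deg p.1 + T.deg p.2 = 0 then _ else 0) = _
  simp only [constWeight, weight_mul, Nat.add_eq_zero_iff, ite_and, ite_mul, zero_mul, mul_ite,
    mul_zero]
  split_ifs <;> rfl

lemma hasSum_weight_mul (hS : Summable S.weight) (hT : Summable T.weight) :
    HasSum (S * T).weight (S.mass * T.mass) := by
  rw [funext (weight_mul (S := S) (T := T))]
  exact hS.hasSum.mul hT.hasSum (hS.mul_of_nonneg hT S.weight_nonneg T.weight_nonneg)

lemma hasSum_degWeight_mul (hS : S.IsSummable) (hT : T.IsSummable) :
    HasSum (S * T).degWeight (S.degMass * T.mass + S.mass * T.degMass) := by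
  rw [funext (degWeight_mul (S := S) (T := T))]
  exact (hS.degWeight.hasSum.mul hT.weight.hasSum
      (hS.degWeight.mul_of_nonneg hT.weight S.degWeight_nonneg T.weight_nonneg)).add
    (hS.weight.hasSum.mul hT.degWeight.hasSum
      (hS.weight.mul_of_nonneg hT.degWeight S.weight_nonneg T.degWeight_nonneg))

lemma hasSum_constWeight_mul (hS : Summable S.weight) (hT : Summable T.weight) :
    HasSum (S * T).constWeight (S.constMass * T.constMass) := by
  have hS' := summable_constWeight hS
  have hT' := summable_constWeight hT
  rw [funext (constWeight_mul (S := S) (T := T))]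
  exact hS'.hasSum.mul hT'.hasSum (hS'.mul_of_nonneg hT' S.constWeight_nonneg T.constWeight_nonneg)

lemma IsSummable.mul (hS : S.IsSummable) (hT : T.IsSummable) : (S * T).IsSummable :=
  ⟨(hasSum_weight_mul hS.weight hT.weight).summable, (hasSum_degWeight_mul hS hT).summable⟩

lemma mass_mul (hS : Summable S.weight) (hT : Summable T.weight) :
    (S * T).mass = S.mass * T.mass :=
  (hasSum_weight_mul hS hT).tsum_eq

lemma degMass_mul (hS : S.IsSummable) (hT : T.IsSummable) :
    (S * T).degMass = S.degMass * T.mass + S.mass * T.degMass :=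
  (hasSum_degWeight_mul hS hT).tsum_eq

lemma constMass_mul (hS : Summable S.weight) (hT : Summable T.weight) :
    (S * T).constMass = S.constMass * T.constMass :=
  (hasSum_constWeight_mul hS hT).tsum_eq

variable (t : ℝ)

lemma weight_smul (i : S.ι) : (t • S).weight i = |t| * S.weight i := by
  show |t * S.coef i| * ∏ j, ‖S.vec i j‖ = _
  rw [abs_mul, weight, mul_assoc]

lemma degWeight_smul (i : S.ι) : (t • S).degWeight i = |t| * S.degWeight i := by
  rw [degWeight, weight_smul]
  exact mul_left_comm _ _ _

lemma constWeight_smul (i : S.ι) : (t • S).constWeight i = |t| * S.constWeight i := by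
  show (if S.deg i = 0 then (t • S).weight i else 0) = |t| * (if S.deg i = 0 then S.weight i else 0)
  rw [weight_smul, mul_ite, mul_zero]

lemma IsSummable.smul (hS : S.IsSummable) : (t • S).IsSummable :=
  ⟨(hS.weight.mul_left |t|).congr fun i => (weight_smul t i).symm,
    (hS.degWeight.mul_left |t|).congr fun i => (degWeight_smul t i).symm⟩

lemma mass_smul : (t • S).mass = |t| * S.mass := by
  show ∑' i : S.ι, (t • S).weight i = _
  simp only [weight_smul, tsum_mul_left, mass]

lemma degMass_smul : (t • S).degMass = |t| * S.degMass := by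
  show ∑' i : S.ι, (t • S).degWeight i = _
  simp only [degWeight_smul, tsum_mul_left, degMass]

lemma constMass_smul : (t • S).constMass = |t| * S.constMass := by
  show ∑' i : S.ι, (t • S).constWeight i = _
  simp only [constWeight_smul, tsum_mul_left, constMass]

lemma IsSummable.pow (hS : S.IsSummable) : ∀ j, (S.pow j).IsSummable
  | 0 => isSummable_one
  | j + 1 => (hS.pow j).mul hS

lemma mass_pow (hS : S.IsSummable) : ∀ j, (S.pow j).mass = S.mass ^ j
  | 0 => mass_one
  | j + 1 => by rw [pow, mass_mul (hS.pow j).weight hS.weight, mass_pow hS j, pow_succ]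

lemma constMass_pow (hS : S.IsSummable) : ∀ j, (S.pow j).constMass = S.constMass ^ j
  | 0 => constMass_one
  | j + 1 => by
    rw [pow, constMass_mul (hS.pow j).weight hS.weight, constMass_pow hS j, pow_succ]

lemma degMass_pow (hS : S.IsSummable) :
    ∀ j, (S.pow j).degMass = j * S.mass ^ (j - 1) * S.degMass
  | 0 => by simp [pow, degMass_one]
  | j + 1 => by
    rw [pow, degMass_mul (hS.pow j) hS, degMass_pow hS j, mass_pow hS]
    rcases j with _ | j
    · simp
    · simp [pow_succ]
      ring

section Sigma

variable {κ : Type} {R : κ → MonomialSeries E}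

lemma hasSum_weight_sigma (hR : ∀ p, Summable (R p).weight)
    (hA : Summable fun p => (R p).mass) : HasSum (sigma R).weight (∑' p, (R p).mass) :=
  hasSum_sigma_of_nonneg (fun q => (R q.1).weight_nonneg q.2) hR hA

lemma hasSum_degWeight_sigma (hR : ∀ p, Summable (R p).degWeight)
    (hB : Summable fun p => (R p).degMass) : HasSum (sigma R).degWeight (∑' p, (R p).degMass) :=
  hasSum_sigma_of_nonneg (fun q => (R q.1).degWeight_nonneg q.2) hR hB

lemma hasSum_constWeight_sigma (hR : ∀ p, Summable (R p).weight)
    (hA : Summable fun p => (R p).mass) :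
    HasSum (sigma R).constWeight (∑' p, (R p).constMass) :=
  hasSum_sigma_of_nonneg (fun q => (R q.1).constWeight_nonneg q.2)
    (fun p => summable_constWeight (hR p))
    (hA.of_nonneg_of_le (fun p => (R p).constMass_nonneg) fun p => constMass_le_mass (hR p))

lemma IsSummable.sigma (hR : ∀ p, (R p).IsSummable) (hA : Summable fun p => (R p).mass)
    (hB : Summable fun p => (R p).degMass) : (sigma R).IsSummable :=
  ⟨(hasSum_weight_sigma (fun p => (hR p).weight) hA).summable,
    (hasSum_degWeight_sigma (fun p => (hR p).degWeight) hB).summable⟩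

lemma mass_sigma (hR : ∀ p, Summable (R p).weight) (hA : Summable fun p => (R p).mass) :
    (sigma R).mass = ∑' p, (R p).mass :=
  (hasSum_weight_sigma hR hA).tsum_eq

lemma degMass_sigma (hR : ∀ p, Summable (R p).degWeight)
    (hB : Summable fun p => (R p).degMass) : (sigma R).degMass = ∑' p, (R p).degMass :=
  (hasSum_degWeight_sigma hR hB).tsum_eq

lemma constMass_sigma (hR : ∀ p, Summable (R p).weight) (hA : Summable fun p => (R p).mass) :
    (sigma R).constMass = ∑' p, (R p).constMass :=
  (hasSum_constWeight_sigma hR hA).tsum_eq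

end Sigma

section Homogeneous

variable {k : ℕ} {a : ℕ → ℝ} {β : ℕ → Fin k → E}

lemma IsSummable.homogeneous (h : Summable (homogeneous k a β).weight) :
    (homogeneous k a β).IsSummable :=
  ⟨h, h.mul_left (k : ℝ)⟩

lemma degMass_homogeneous : (homogeneous k a β).degMass = k * (homogeneous k a β).mass := by
  show ∑' v, (k : ℝ) * (homogeneous k a β).weight v = _
  exact tsum_mul_left

lemma constMass_homogeneous :
    (homogeneous k a β).constMass = if k = 0 then (homogeneous k a β).mass else 0 := by
  split_ifs with hk
  · exact tsum_congr fun v => if_pos hk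
  · exact (tsum_congr fun v => if_neg hk).trans tsum_zero

end Homogeneous

section Comp₂

variable {G K : MonomialSeries E} (hG : G.IsSummable) (hK : K.IsSummable) (c : ℕ → ℕ → ℝ)
include hG hK

lemma mass_smul_pow_mul_pow (j k : ℕ) :
    (c j k • (G.pow j * K.pow k)).mass = |c j k| * G.mass ^ j * K.mass ^ k := by
  rw [mass_smul, mass_mul (hG.pow j).weight (hK.pow k).weight, mass_pow hG, mass_pow hK,
    mul_assoc]

lemma degMass_smul_pow_mul_pow (j k : ℕ) :
    (c j k • (G.pow j * K.pow k)).degMass =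
      j * |c j k| * G.mass ^ (j - 1) * K.mass ^ k * G.degMass +
        k * |c j k| * G.mass ^ j * K.mass ^ (k - 1) * K.degMass := by
  rw [degMass_smul, degMass_mul (hG.pow j) (hK.pow k), degMass_pow hG, degMass_pow hK,
    mass_pow hG, mass_pow hK]
  ring

lemma constMass_smul_pow_mul_pow (j k : ℕ) :
    (c j k • (G.pow j * K.pow k)).constMass = |c j k| * G.constMass ^ j * K.constMass ^ k := by
  rw [constMass_smul, constMass_mul (hG.pow j).weight (hK.pow k).weight, constMass_pow hG,
    constMass_pow hK, mul_assoc]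

variable {c}
variable (hf : Summable fun p : ℕ × ℕ => |c p.1 p.2| * G.mass ^ p.1 * K.mass ^ p.2)
variable (hfs : Summable fun p : ℕ × ℕ =>
  (p.1 : ℝ) * |c p.1 p.2| * G.mass ^ (p.1 - 1) * K.mass ^ p.2)
variable (hft : Summable fun p : ℕ × ℕ =>
  (p.2 : ℝ) * |c p.1 p.2| * G.mass ^ p.1 * K.mass ^ (p.2 - 1))

lemma IsSummable.smul_pow_mul_pow (j k : ℕ) : (c j k • (G.pow j * K.pow k)).IsSummable :=
  ((hG.pow j).mul (hK.pow k)).smul _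

include hf in
lemma summable_mass_smul_pow_mul_pow :
    Summable fun p : ℕ × ℕ => (c p.1 p.2 • (G.pow p.1 * K.pow p.2)).mass := by
  simpa only [mass_smul_pow_mul_pow hG hK] using hf

include hfs hft in
lemma hasSum_degMass_smul_pow_mul_pow :
    HasSum (fun p : ℕ × ℕ => (c p.1 p.2 • (G.pow p.1 * K.pow p.2)).degMass)
      ((∑' p : ℕ × ℕ, (p.1 : ℝ) * |c p.1 p.2| * G.mass ^ (p.1 - 1) * K.mass ^ p.2) * G.degMass +
        (∑' p : ℕ × ℕ, (p.2 : ℝ) * |c p.1 p.2| * G.mass ^ p.1 * K.mass ^ (p.2 - 1)) *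
          K.degMass) := by
  simpa only [degMass_smul_pow_mul_pow hG hK] using
    (hfs.hasSum.mul_right G.degMass).add (hft.hasSum.mul_right K.degMass)

include hf hfs hft in
lemma IsSummable.comp₂ : (comp₂ c G K).IsSummable :=
  .sigma (fun p => hG.smul_pow_mul_pow hK p.1 p.2) (summable_mass_smul_pow_mul_pow hG hK hf)
    (hasSum_degMass_smul_pow_mul_pow hG hK hfs hft).summable

include hfs hft in
lemma degMass_comp₂ : (comp₂ c G K).degMass =
    (∑' p : ℕ × ℕ, (p.1 : ℝ) * |c p.1 p.2| * G.mass ^ (p.1 - 1) * K.mass ^ p.2) * G.degMass +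
      (∑' p : ℕ × ℕ, (p.2 : ℝ) * |c p.1 p.2| * G.mass ^ p.1 * K.mass ^ (p.2 - 1)) * K.degMass :=
  (degMass_sigma (fun p => (hG.smul_pow_mul_pow hK p.1 p.2).degWeight)
    (hasSum_degMass_smul_pow_mul_pow hG hK hfs hft).summable).trans
    (hasSum_degMass_smul_pow_mul_pow hG hK hfs hft).tsum_eq

include hf in
lemma constMass_comp₂ :
    (comp₂ c G K).constMass = ∑' p : ℕ × ℕ, |c p.1 p.2| * G.constMass ^ p.1 * K.constMass ^ p.2 :=
  (constMass_sigma (fun p => (hG.smul_pow_mul_pow hK p.1 p.2).weight)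
    (summable_mass_smul_pow_mul_pow hG hK hf)).trans
    (tsum_congr fun p => constMass_smul_pow_mul_pow hG hK c p.1 p.2)

end Comp₂

end Mass

section Eval

variable [SeminormedAddCommGroup E] [InnerProductSpace ℝ E] (S T : MonomialSeries E)

noncomputable def term (i : S.ι) (z : E) : ℝ := S.coef i * ∏ j, ⟪S.vec i j, z⟫

noncomputable def eval (z : E) : ℝ := ∑' i, S.term i z

variable {S T} {z : E}

lemma abs_term_le (hz : ‖z‖ ≤ 1) (i : S.ι) : |S.term i z| ≤ S.weight i := by
  rw [term, weight, abs_mul, Finset.abs_prod]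
  gcongr with j
  calc |⟪S.vec i j, z⟫| ≤ ‖S.vec i j‖ * ‖z‖ := abs_real_inner_le_norm _ _
    _ ≤ ‖S.vec i j‖ := mul_le_of_le_one_right (norm_nonneg _) hz

lemma summable_norm_term (hS : Summable S.weight) (hz : ‖z‖ ≤ 1) :
    Summable fun i => ‖S.term i z‖ :=
  hS.of_nonneg_of_le (fun _ => norm_nonneg _) (abs_term_le hz)

lemma summable_term (hS : Summable S.weight) (hz : ‖z‖ ≤ 1) : Summable fun i => S.term i z :=
  (summable_norm_term hS hz).of_norm

lemma eval_one : (1 : MonomialSeries E).eval z = 1 := by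
  show ∑' _ : Unit, (1 : ℝ) * ∏ j : Fin 0, _ = 1
  simp

lemma eval_mul (hS : Summable S.weight) (hT : Summable T.weight) (hz : ‖z‖ ≤ 1) :
    (S * T).eval z = S.eval z * T.eval z := by
  have hterm (p : S.ι × T.ι) : (S * T).term p z = S.term p.1 z * T.term p.2 z := by
    show S.coef p.1 * T.coef p.2 * ∏ j, ⟪Fin.append (S.vec p.1) (T.vec p.2) j, z⟫ = _
    rw [Fin.prod_univ_add]
    simp only [Fin.append_left, Fin.append_right, term]
    ring
  show ∑' p : S.ι × T.ι, (S * T).term p z = _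
  simp only [hterm]
  exact (tsum_mul_tsum_of_summable_norm (summable_norm_term hS hz)
    (summable_norm_term hT hz)).symm

lemma eval_smul (t : ℝ) : (t • S).eval z = t * S.eval z := by
  show ∑' i : S.ι, t * S.coef i * ∏ j, ⟪S.vec i j, z⟫ = _
  simp only [mul_assoc, tsum_mul_left, eval, term]

lemma eval_pow (hS : S.IsSummable) (hz : ‖z‖ ≤ 1) : ∀ j, (S.pow j).eval z = S.eval z ^ j
  | 0 => eval_one
  | j + 1 => by
    rw [pow, eval_mul (hS.pow j).weight hS.weight hz, eval_pow hS hz j, pow_succ]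

lemma eval_sigma {κ : Type} {R : κ → MonomialSeries E} (hR : ∀ p, Summable (R p).weight)
    (hA : Summable fun p => (R p).mass) (hz : ‖z‖ ≤ 1) :
    (sigma R).eval z = ∑' p, (R p).eval z :=
  (summable_term (hasSum_weight_sigma hR hA).summable hz).tsum_sigma'
    fun p => summable_term (hR p) hz

lemma eval_comp₂ {G K : MonomialSeries E} (hG : G.IsSummable) (hK : K.IsSummable)
    {c : ℕ → ℕ → ℝ} (hf : Summable fun p : ℕ × ℕ => |c p.1 p.2| * G.mass ^ p.1 * K.mass ^ p.2)
    (hz : ‖z‖ ≤ 1) :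
    (comp₂ c G K).eval z = ∑' p : ℕ × ℕ, c p.1 p.2 * G.eval z ^ p.1 * K.eval z ^ p.2 := by
  rw [comp₂, eval_sigma (fun p => (hG.smul_pow_mul_pow hK p.1 p.2).weight)
    (summable_mass_smul_pow_mul_pow hG hK hf) hz]
  refine tsum_congr fun p => ?_
  rw [eval_smul, eval_mul (hG.pow _).weight (hK.pow _).weight hz, eval_pow hG hz,
    eval_pow hK hz, mul_assoc]

end Eval

section Family

variable {d : ℕ} {a : ℕ → ℕ → ℝ} {β : (k : ℕ) → ℕ → Fin k → EuclideanSpace ℝ (Fin d)}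
  (haux : ∀ k, Summable fun v => |a k v| * ∏ i : Fin k, ‖β k v i‖)
  (h1 : Summable fun k => auxCoef d a β k)

lemma summable_degMass_homogeneous (h1' : Summable fun k : ℕ => (k : ℝ) * auxCoef d a β k) :
    Summable fun k => (homogeneous k (a k) (β k)).degMass :=
  h1'.congr fun _ => degMass_homogeneous.symm

include haux

include h1 in
lemma IsSummable.ofFamily (h1' : Summable fun k : ℕ => (k : ℝ) * auxCoef d a β k) :
    (ofFamily a β).IsSummable :=
  .sigma (fun k => .homogeneous (haux k)) h1 (summable_degMass_homogeneous h1')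

include h1 in
lemma mass_ofFamily : (ofFamily a β).mass = ∑' k, auxCoef d a β k :=
  mass_sigma haux h1

lemma degMass_ofFamily (h1' : Summable fun k : ℕ => (k : ℝ) * auxCoef d a β k) :
    (ofFamily a β).degMass = ∑' k : ℕ, (k : ℝ) * auxCoef d a β k :=
  (degMass_sigma (fun k => (IsSummable.homogeneous (haux k)).degWeight)
    (summable_degMass_homogeneous h1')).trans (tsum_congr fun _ => degMass_homogeneous)

include h1 in
lemma constMass_ofFamily : (ofFamily a β).constMass = auxCoef d a β 0 :=
  (constMass_sigma haux h1).trans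
    ((tsum_congr fun _ => constMass_homogeneous).trans (tsum_ite_eq 0 _))

include h1 in
lemma eval_ofFamily {z : EuclideanSpace ℝ (Fin d)} (hz : ‖z‖ ≤ 1) :
    (ofFamily a β).eval z = familyFun d a β z :=
  eval_sigma haux h1 hz

end Family

end MonomialSeries

section Kernel

variable {ι : Type*} [Fintype ι] {d : ℕ}

/-- The coordinates of `w 0 ⊗ ⋯ ⊗ w (m - 1)` in `(ℝᵈ)^{⊗m} ≃ ℝ^(Fin m → Fin d)`. -/
def tensorCoord {m : ℕ} (w : Fin m → EuclideanSpace ℝ (Fin d)) (t : Fin m → Fin d) : ℝ :=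
  ∏ i, w i (t i)

lemma prod_inner_eq_sum_tensorCoord {m : ℕ} (v w : Fin m → EuclideanSpace ℝ (Fin d)) :
    ∏ i, ⟪v i, w i⟫ = ∑ t, tensorCoord v t * tensorCoord w t := by
  simp only [PiLp.inner_apply, RCLike.inner_apply, conj_trivial, tensorCoord,
    ← Finset.prod_mul_distrib]
  rw [Fintype.prod_sum]
  simp only [mul_comm]

lemma sum_tensorCoord_sq {m : ℕ} (w : Fin m → EuclideanSpace ℝ (Fin d)) :
    ∑ t, tensorCoord w t ^ 2 = (∏ i, ‖w i‖) ^ 2 := by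
  simp only [sq, ← prod_inner_eq_sum_tensorCoord, real_inner_self_eq_norm_sq,
    Finset.prod_mul_distrib]

variable {E : Type*} [SeminormedAddCommGroup E] [InnerProductSpace ℝ E]

def gramPowForm (x : ι → E) (u : ι → ℝ) (m : ℕ) : ℝ := ∑ a, ∑ c, u a * u c * ⟪x a, x c⟫ ^ m

lemma gramPowForm_eq_sum_sq (x : ι → EuclideanSpace ℝ (Fin d)) (u : ι → ℝ) (m : ℕ) :
    gramPowForm x u m =
      ∑ t : Fin m → Fin d, (∑ a, u a * tensorCoord (fun _ : Fin m => x a) t) ^ 2 := by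
  have h (a c : ι) : ⟪x a, x c⟫ ^ m =
      ∑ t, tensorCoord (fun _ : Fin m => x a) t * tensorCoord (fun _ : Fin m => x c) t := by
    rw [← prod_inner_eq_sum_tensorCoord, Finset.prod_const, Finset.card_univ, Fintype.card_fin]
  simp only [gramPowForm, h, sq, Finset.mul_sum, Finset.sum_mul]
  rw [Finset.sum_congr rfl fun a _ => Finset.sum_comm, Finset.sum_comm]
  refine Finset.sum_congr rfl fun t _ => Finset.sum_congr rfl fun a _ =>
    Finset.sum_congr rfl fun c _ => by ring

lemma gramPowForm_nonneg (x : ι → EuclideanSpace ℝ (Fin d)) (u : ι → ℝ) (m : ℕ) :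
    0 ≤ gramPowForm x u m := by
  rw [gramPowForm_eq_sum_sq]
  positivity

lemma abs_sum_mul_prod_inner_le (x : ι → EuclideanSpace ℝ (Fin d)) (u : ι → ℝ) {m : ℕ}
    (w : Fin m → EuclideanSpace ℝ (Fin d)) :
    |∑ a, u a * ∏ i, ⟪w i, x a⟫| ≤ (∏ i, ‖w i‖) * √(gramPowForm x u m) := by
  have h : ∑ a, u a * ∏ i, ⟪w i, x a⟫ =
      ∑ t, tensorCoord w t * ∑ a, u a * tensorCoord (fun _ : Fin m => x a) t := by
    simp only [prod_inner_eq_sum_tensorCoord w, Finset.mul_sum]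
    rw [Finset.sum_comm]
    exact Finset.sum_congr rfl fun t _ => Finset.sum_congr rfl fun a _ => by ring
  rw [h, ← Real.sqrt_sq (by positivity : 0 ≤ ∏ i, ‖w i‖), ← Real.sqrt_mul (sq_nonneg _),
    ← sum_tensorCoord_sq, gramPowForm_eq_sum_sq]
  exact Real.abs_le_sqrt (Finset.sum_mul_sq_le_sq_mul_sq _ _ _)

lemma hasSum_gramPowForm {x : ι → E} (hx : ∀ a, ‖x a‖ ≤ 1) {b : ℕ → ℝ} (hb0 : ∀ k, 0 ≤ b k)
    (hb : Summable b) {H : Matrix ι ι ℝ} (hH : ∀ a c, H a c = ∑' k, b k * ⟪x a, x c⟫ ^ k)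
    (u : ι → ℝ) : HasSum (fun k => b k * gramPowForm x u k) (u ⬝ᵥ H *ᵥ u) := by
  have hentry (a c : ι) : HasSum (fun k => b k * ⟪x a, x c⟫ ^ k) (H a c) := by
    rw [hH]
    refine (hb.of_norm_bounded fun k => ?_).hasSum
    rw [norm_mul, norm_pow, Real.norm_of_nonneg (hb0 k)]
    refine mul_le_of_le_one_right (hb0 k) (pow_le_one₀ (norm_nonneg _) ?_)
    exact (norm_inner_le_norm _ _).trans (mul_le_one₀ (hx a) (norm_nonneg _) (hx c))
  have hquad : u ⬝ᵥ H *ᵥ u = ∑ a, ∑ c, u a * u c * H a c := by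
    simp only [dotProduct, mulVec, Finset.mul_sum]
    exact Finset.sum_congr rfl fun a _ => Finset.sum_congr rfl fun c _ => by ring
  simp only [hquad, gramPowForm, Finset.mul_sum]
  refine hasSum_sum fun a _ => hasSum_sum fun c _ => ?_
  simpa only [mul_left_comm (b _)] using (hentry a c).mul_left (u a * u c)

end Kernel

lemma one_le_max_sq_mul {b : ℕ → ℝ} (hb0 : 1 ≤ b 0)
    (hbk : ∀ k : ℕ, 1 ≤ k → 1 / (k : ℝ) ^ 2 ≤ b k) (m : ℕ) : 1 ≤ max (m : ℝ) 1 ^ 2 * b m := by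
  rcases Nat.eq_zero_or_pos m with rfl | hm
  · simpa using hb0
  · have hm' : (1 : ℝ) ≤ m := by exact_mod_cast hm
    rw [max_eq_left hm', ← div_le_iff₀' (by positivity)]
    exact hbk m hm

section

variable {ι : Type*} [Fintype ι] {d : ℕ} {x : ι → EuclideanSpace ℝ (Fin d)} (hx : ∀ a, ‖x a‖ ≤ 1)
include hx

lemma sqrt_gramPowForm_le {b : ℕ → ℝ} (hb0 : 1 ≤ b 0)
    (hbk : ∀ k : ℕ, 1 ≤ k → 1 / (k : ℝ) ^ 2 ≤ b k) (hb : Summable b) {H : Matrix ι ι ℝ}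
    (hH : ∀ a c, H a c = ∑' k, b k * ⟪x a, x c⟫ ^ k) (u : ι → ℝ) (m : ℕ) :
    √(gramPowForm x u m) ≤ max (m : ℝ) 1 * √(u ⬝ᵥ H *ᵥ u) := by
  have hκ := one_le_max_sq_mul hb0 hbk
  have hb_nonneg (k : ℕ) : 0 ≤ b k :=
    (pos_of_mul_pos_right (zero_lt_one.trans_le (hκ k)) (sq_nonneg _)).le
  have hQ := gramPowForm_nonneg x u m
  have hle : b m * gramPowForm x u m ≤ u ⬝ᵥ H *ᵥ u :=
    le_hasSum (hasSum_gramPowForm hx hb_nonneg hb hH u) m fun k _ =>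
      mul_nonneg (hb_nonneg k) (gramPowForm_nonneg x u k)
  rw [← Real.sqrt_sq (by positivity : 0 ≤ max (m : ℝ) 1), ← Real.sqrt_mul (sq_nonneg _)]
  refine Real.sqrt_le_sqrt ?_
  calc gramPowForm x u m ≤ (max (m : ℝ) 1 ^ 2 * b m) * gramPowForm x u m :=
        le_mul_of_one_le_left hQ (hκ m)
    _ ≤ max (m : ℝ) 1 ^ 2 * (u ⬝ᵥ H *ᵥ u) := by
        rw [mul_assoc]
        gcongr

lemma abs_sum_mul_eval_le {S : MonomialSeries (EuclideanSpace ℝ (Fin d))} (hS : S.IsSummable)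
    {u : ι → ℝ} {r : ℝ} (hQ : ∀ m, √(gramPowForm x u m) ≤ max (m : ℝ) 1 * r) :
    |∑ a, u a * S.eval (x a)| ≤ (S.degMass + S.constMass) * r := by
  have hswap : ∑ a, u a * S.eval (x a) = ∑' i, ∑ a, u a * S.term i (x a) := by
    simp only [MonomialSeries.eval, ← tsum_mul_left]
    exact (Summable.tsum_finsetSum fun a _ =>
      (MonomialSeries.summable_term hS.weight (hx a)).mul_left (u a)).symm
  have hweight (i : S.ι) :
      S.weight i * max (S.deg i : ℝ) 1 = S.degWeight i + S.constWeight i := by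
    unfold MonomialSeries.degWeight MonomialSeries.constWeight
    split_ifs with h
    · simp [h]
    · rw [max_eq_left (by exact_mod_cast Nat.one_le_iff_ne_zero.2 h)]
      ring
  have hbound (i : S.ι) :
      ‖∑ a, u a * S.term i (x a)‖ ≤ (S.degWeight i + S.constWeight i) * r := by
    calc ‖∑ a, u a * S.term i (x a)‖
        = |S.coef i| * |∑ a, u a * ∏ j, ⟪S.vec i j, x a⟫| := by
          rw [Real.norm_eq_abs, ← abs_mul, Finset.mul_sum]
          simp only [MonomialSeries.term, mul_left_comm]
      _ ≤ |S.coef i| * ((∏ j, ‖S.vec i j‖) * √(gramPowForm x u (S.deg i))) := by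
          gcongr
          exact abs_sum_mul_prod_inner_le x u _
      _ ≤ S.weight i * (max (S.deg i : ℝ) 1 * r) := by
          rw [MonomialSeries.weight, mul_assoc]
          gcongr
          exact hQ _
      _ = (S.degWeight i + S.constWeight i) * r := by rw [← mul_assoc, hweight]
  rw [hswap, ← Real.norm_eq_abs]
  exact tsum_of_norm_bounded ((hS.degWeight.hasSum.add
    (MonomialSeries.summable_constWeight hS.weight).hasSum).mul_right r) hbound

end

lemma sqrt_dotProduct_inv_mulVec_le {ι : Type*} [Fintype ι] [DecidableEq ι]
    (H : Matrix ι ι ℝ) (y : ι → ℝ) {M : ℝ} (hM : 0 ≤ M)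
    (hy : ∀ u, |u ⬝ᵥ y| ≤ M * √(u ⬝ᵥ H *ᵥ u)) : √(y ⬝ᵥ (H⁻¹ *ᵥ y)) ≤ M := by
  by_cases hH : IsUnit H.det
  · set q := y ⬝ᵥ (H⁻¹ *ᵥ y)
    have hq : |q| ≤ M * √q := by
      have := hy (H⁻¹ *ᵥ y)
      rwa [mulVec_mulVec, mul_nonsing_inv _ hH, one_mulVec, dotProduct_comm] at this
    rcases le_or_gt q 0 with hq0 | hq0
    · rw [Real.sqrt_eq_zero'.2 hq0]
      exact hM
    · nlinarith [Real.mul_self_sqrt hq0.le, Real.sqrt_pos.2 hq0, le_abs_self q]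
  · simp [nonsing_inv_apply_not_isUnit _ hH, hM]

open MonomialSeries in
theorem stmt9_general (n d : ℕ) (x : Fin n → EuclideanSpace ℝ (Fin d))
    (hx : ∀ a, ‖x a‖ = 1)
    (b : ℕ → ℝ) (hb0 : 1 ≤ b 0) (hbk : ∀ k : ℕ, 1 ≤ k → 1 / (k : ℝ) ^ 2 ≤ b k)
    (hb_sum : Summable b)
    (H : Matrix (Fin n) (Fin n) ℝ)
    (hH : ∀ a c, H a c = ∑' k : ℕ, b k * ⟪x a, x c⟫ ^ k)
    (c : ℕ → ℕ → ℝ)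
    (ag : ℕ → ℕ → ℝ) (βg : (k : ℕ) → ℕ → Fin k → EuclideanSpace ℝ (Fin d))
    (ah : ℕ → ℕ → ℝ) (βh : (k : ℕ) → ℕ → Fin k → EuclideanSpace ℝ (Fin d))
    (hauxg : ∀ k : ℕ, Summable (fun v : ℕ => |ag k v| * ∏ i : Fin k, ‖βg k v i‖))
    (hauxh : ∀ k : ℕ, Summable (fun v : ℕ => |ah k v| * ∏ i : Fin k, ‖βh k v i‖))
    (hg1 : Summable (fun k : ℕ => auxCoef d ag βg k))
    (hg1' : Summable (fun k : ℕ => (k : ℝ) * auxCoef d ag βg k))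
    (hh1 : Summable (fun k : ℕ => auxCoef d ah βh k))
    (hh1' : Summable (fun k : ℕ => (k : ℝ) * auxCoef d ah βh k))
    (hf : Summable (fun p : ℕ × ℕ => |c p.1 p.2| *
      (∑' k : ℕ, auxCoef d ag βg k) ^ p.1 * (∑' k : ℕ, auxCoef d ah βh k) ^ p.2))
    (hfs : Summable (fun p : ℕ × ℕ => (p.1 : ℝ) * |c p.1 p.2| *
      (∑' k : ℕ, auxCoef d ag βg k) ^ (p.1 - 1) *
      (∑' k : ℕ, auxCoef d ah βh k) ^ p.2))
    (hft : Summable (fun p : ℕ × ℕ => (p.2 : ℝ) * |c p.1 p.2| *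
      (∑' k : ℕ, auxCoef d ag βg k) ^ p.1 *
      (∑' k : ℕ, auxCoef d ah βh k) ^ (p.2 - 1)))
    (y : Fin n → ℝ)
    (hy : ∀ a, y a = ∑' p : ℕ × ℕ, c p.1 p.2 *
      (familyFun d ag βg (x a)) ^ p.1 * (familyFun d ah βh (x a)) ^ p.2) :
    Real.sqrt (y ⬝ᵥ (H⁻¹ *ᵥ y)) ≤
      (∑' p : ℕ × ℕ, (p.1 : ℝ) * |c p.1 p.2| *
          (∑' k : ℕ, auxCoef d ag βg k) ^ (p.1 - 1) *
          (∑' k : ℕ, auxCoef d ah βh k) ^ p.2) *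
        (∑' k : ℕ, (k : ℝ) * auxCoef d ag βg k) +
      (∑' p : ℕ × ℕ, (p.2 : ℝ) * |c p.1 p.2| *
          (∑' k : ℕ, auxCoef d ag βg k) ^ p.1 *
          (∑' k : ℕ, auxCoef d ah βh k) ^ (p.2 - 1)) *
        (∑' k : ℕ, (k : ℝ) * auxCoef d ah βh k) +
      ∑' p : ℕ × ℕ, |c p.1 p.2| *
        (auxCoef d ag βg 0) ^ p.1 * (auxCoef d ah βh 0) ^ p.2 := by
  have hxle (a : Fin n) : ‖x a‖ ≤ 1 := (hx a).le
  have hG := IsSummable.ofFamily hauxg hg1 hg1'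
  have hK := IsSummable.ofFamily hauxh hh1 hh1'
  rw [← mass_ofFamily hauxg hg1, ← mass_ofFamily hauxh hh1] at hf hfs hft ⊢
  rw [← degMass_ofFamily hauxg hg1', ← degMass_ofFamily hauxh hh1',
    ← constMass_ofFamily hauxg hg1, ← constMass_ofFamily hauxh hh1,
    ← degMass_comp₂ hG hK hfs hft, ← constMass_comp₂ hG hK hf]
  set S := comp₂ c (ofFamily ag βg) (ofFamily ah βh)
  refine sqrt_dotProduct_inv_mulVec_le H y (add_nonneg S.degMass_nonneg S.constMass_nonneg)
    fun u => ?_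
  have hyS : u ⬝ᵥ y = ∑ a, u a * S.eval (x a) := by
    refine Finset.sum_congr rfl fun a _ => ?_
    rw [hy a, eval_comp₂ hG hK hf (hxle a), eval_ofFamily hauxg hg1 (hxle a),
      eval_ofFamily hauxh hh1 (hxle a)]
  rw [hyS]
  exact abs_sum_mul_eval_le hxle (hG.comp₂ hK hf hfs hft)
    (sqrt_gramPowForm_le hxle hb0 hbk hb_sum hH u)

/-- **Bivariate chain rule for learning bounds.**
If `f(s,t) = ∑_{j,k} c_{jk} sʲ tᵏ` is a bivariate power series, `g` and `h` are
given by multivariate power-series families with auxiliary functions `g̃`, `h̃`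
(finite at 1 along with their derivatives), `f̃` and its partial derivatives
converge at `(g̃(1), h̃(1))`, and `y_a = f(g(x_a), h(x_a))`, then
`√(yᵀ H⁻¹ y) ≤ ∂ₛf̃(g̃(1),h̃(1)) g̃′(1) + ∂ₜf̃(g̃(1),h̃(1)) h̃′(1) + f̃(g̃(0),h̃(0))`. -/
theorem stmt9 (n d : ℕ) (x : Fin n → EuclideanSpace ℝ (Fin d))
    (hx : ∀ a, ‖x a‖ = 1)
    (b : ℕ → ℝ) (hb0 : 1 ≤ b 0) (hbk : ∀ k : ℕ, 1 ≤ k → 1 / (k : ℝ) ^ 2 ≤ b k)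
    (hb_sum : Summable b)
    (H : Matrix (Fin n) (Fin n) ℝ)
    (hH : ∀ a c, H a c = ∑' k : ℕ, b k * ⟪x a, x c⟫ ^ k)
    (hHpd : H.PosDef)
    (c : ℕ → ℕ → ℝ)
    (ag : ℕ → ℕ → ℝ) (βg : (k : ℕ) → ℕ → Fin k → EuclideanSpace ℝ (Fin d))
    (ah : ℕ → ℕ → ℝ) (βh : (k : ℕ) → ℕ → Fin k → EuclideanSpace ℝ (Fin d))
    (hauxg : ∀ k : ℕ, Summable (fun v : ℕ => |ag k v| * ∏ i : Fin k, ‖βg k v i‖))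
    (hauxh : ∀ k : ℕ, Summable (fun v : ℕ => |ah k v| * ∏ i : Fin k, ‖βh k v i‖))
    (hg1 : Summable (fun k : ℕ => auxCoef d ag βg k))
    (hg1' : Summable (fun k : ℕ => (k : ℝ) * auxCoef d ag βg k))
    (hh1 : Summable (fun k : ℕ => auxCoef d ah βh k))
    (hh1' : Summable (fun k : ℕ => (k : ℝ) * auxCoef d ah βh k))
    (hf : Summable (fun p : ℕ × ℕ => |c p.1 p.2| *
      (∑' k : ℕ, auxCoef d ag βg k) ^ p.1 * (∑' k : ℕ, auxCoef d ah βh k) ^ p.2))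
    (hfs : Summable (fun p : ℕ × ℕ => (p.1 : ℝ) * |c p.1 p.2| *
      (∑' k : ℕ, auxCoef d ag βg k) ^ (p.1 - 1) *
      (∑' k : ℕ, auxCoef d ah βh k) ^ p.2))
    (hft : Summable (fun p : ℕ × ℕ => (p.2 : ℝ) * |c p.1 p.2| *
      (∑' k : ℕ, auxCoef d ag βg k) ^ p.1 *
      (∑' k : ℕ, auxCoef d ah βh k) ^ (p.2 - 1)))
    (y : Fin n → ℝ)
    (hy : ∀ a, y a = ∑' p : ℕ × ℕ, c p.1 p.2 *
      (familyFun d ag βg (x a)) ^ p.1 * (familyFun d ah βh (x a)) ^ p.2) :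
    Real.sqrt (y ⬝ᵥ (H⁻¹ *ᵥ y)) ≤
      (∑' p : ℕ × ℕ, (p.1 : ℝ) * |c p.1 p.2| *
          (∑' k : ℕ, auxCoef d ag βg k) ^ (p.1 - 1) *
          (∑' k : ℕ, auxCoef d ah βh k) ^ p.2) *
        (∑' k : ℕ, (k : ℝ) * auxCoef d ag βg k) +
      (∑' p : ℕ × ℕ, (p.2 : ℝ) * |c p.1 p.2| *
          (∑' k : ℕ, auxCoef d ag βg k) ^ p.1 *
          (∑' k : ℕ, auxCoef d ah βh k) ^ (p.2 - 1)) *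
        (∑' k : ℕ, (k : ℝ) * auxCoef d ah βh k) +
      ∑' p : ℕ × ℕ, |c p.1 p.2| *
        (auxCoef d ag βg 0) ^ p.1 * (auxCoef d ah βh 0) ^ p.2 :=
  stmt9_general n d x hx b hb0 hbk hb_sum H hH c ag βg ah βh hauxg hauxh hg1 hg1' hh1 hh1' hf hfs
    hft y hy
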